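/- (Theorem 2: robustness of the tracking error system.) Let N ≥ 2, α>0, λ>0, l>0, k₁,…,k_N ∈ (0,l) (indices cyclic modulo N, index 0 meaning N), and σ ∈ (0,λ). For i = 1,…,N let f^{(i)} be continuous on [0,1]×[0,∞), d₀^{(i)}, d₁^{(i)} continuous on [0,∞), q̃₀^{(i)}, ũ₀^{(i)} ∈ C([0,1]). Let q̃^{(i)} be classical solutions on [0,1]×[0,∞) of q̃_t^{(i)} = α q̃_xx^{(i)} − λ q̃^{(i)} + f^{(i)}, q̃_x^{(i)}(0,t)=0, q̃_x^{(i)}(1,t) = −l q̃^{(i)}(1,t), q̃^{(i)}(·,0)=q̃₀^{(i)}, and let ũ^{(i)} be classical solutions of ũ_t^{(i)} = α ũ_xx^{(i)} − λ ũ^{(i)} + f^{(i)}, ũ^{(i)}(0,t) = q̃^{(i)}(0,t) + d₀^{(i)}(t), ũ_x^{(i)}(1,t) = −l ũ^{(i)}(1,t) + k_i ũ^{(i−1)}(1,t) + d₁^{(i)}(t), ũ^{(i)}(·,0)=ũ₀^{(i)}. Set 𝒩 := (Π_i k_i)/l^N, 𝓜_i := 1 + Σ_{m=1}^{i}(Π_{r=0}^{m−1}k_{i−r})/l^m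 + Σ_{m=i+1}^{N−1}(Π_{r=0}^{i−1}k_{i−r})(Π_{s=0}^{m−i−1}k_{N−s})/l^m, 𝓒_i := 𝓜_i/(1−𝒩), 𝓒̃_i := 1 + (k_i/l)𝓒_{i−1}, and 𝓓(t) := (2/(λ−σ)) max_i ‖f^{(i)}‖_{C([0,1]×[0,t])} + max_i ‖d₀^{(i)}‖_{C([0,t])} + (1/l) max_i ‖d₁^{(i)}‖_{C([0,t])}. Then for every i and every t > 0, ‖ũ^{(i)}(·,t)‖_{C([0,1])} ≤ 𝓒̃_i 𝓓(t) + 𝓒̃_i e^{−σt} ( max_j ‖ũ₀^{(j)}‖_{C([0,1])} + max_j ‖q̃₀^{(j)}‖_{C([0,1])} ). -/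

import Mathlib

/-- Max-norm of a function over `[0,1]`. -/
noncomputable def supIcc01 (h : ℝ → ℝ) : ℝ := sSup ((fun x => |h x|) '' Set.Icc 0 1)

/-- Max-norm of a function of `(x,s)` over `[0,1] × [0,t]`. -/
noncomputable def supRect (F : ℝ → ℝ → ℝ) (t : ℝ) : ℝ :=
  sSup ((fun p : ℝ × ℝ => |F p.1 p.2|) '' (Set.Icc 0 1 ×ˢ Set.Icc 0 t))

/-- Max-norm of a function over `[0,t]`. -/
noncomputable def supT (g : ℝ → ℝ) (t : ℝ) : ℝ := sSup ((fun s => |g s|) '' Set.Icc 0 t)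

/-- Maximum over the agents `i = 1,…,N`. -/
noncomputable def maxAgents (N : ℕ) (g : ℤ → ℝ) : ℝ := sSup (g '' Set.Icc (1:ℤ) (N:ℤ))

/-- `𝒩 := (∏_{i=1}^N k_i)/l^N`. -/
noncomputable def calN (N : ℕ) (l : ℝ) (k : ℤ → ℝ) : ℝ :=
  (∏ i ∈ Finset.Icc (1:ℤ) (N:ℤ), k i) / l ^ N

/-- `𝓜_i`. -/
noncomputable def calM (N : ℕ) (l : ℝ) (k : ℤ → ℝ) (i : ℤ) : ℝ :=
  1 + (∑ m ∈ Finset.Icc (1:ℤ) i, (∏ r ∈ Finset.Icc (0:ℤ) (m - 1), k (i - r)) / l ^ m)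
    + (∑ m ∈ Finset.Icc (i + 1) ((N:ℤ) - 1),
        ((∏ r ∈ Finset.Icc (0:ℤ) (i - 1), k (i - r)) *
          (∏ s ∈ Finset.Icc (0:ℤ) (m - i - 1), k ((N:ℤ) - s))) / l ^ m)

/-- `𝓒_i := 𝓜_i/(1−𝒩)`. -/
noncomputable def calC (N : ℕ) (l : ℝ) (k : ℤ → ℝ) (i : ℤ) : ℝ :=
  calM N l k i / (1 - calN N l k)

/-- `𝓒̃_i := 1 + (k_i/l)𝓒_{i−1}`. -/
noncomputable def calCt (N : ℕ) (l : ℝ) (k : ℤ → ℝ) (i : ℤ) : ℝ :=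
  1 + (k i / l) * calC N l k (i - 1)

/-- `𝓓(t)`. -/
noncomputable def calD (N : ℕ) (lam σ l : ℝ) (f : ℤ → ℝ → ℝ → ℝ)
    (d₀ d₁ : ℤ → ℝ → ℝ) (t : ℝ) : ℝ :=
  (2 / (lam - σ)) * maxAgents N (fun i => supRect (f i) t) +
    maxAgents N (fun i => supT (d₀ i) t) +
    (1 / l) * maxAgents N (fun i => supT (d₁ i) t)

/-- `u` is a classical solution on `[0,1] × [0,∞)` of `u_t = a u_xx - lam u + f`. -/
structure IsParabolicSol (a lam : ℝ) (f u ux uxx ut : ℝ → ℝ → ℝ) : Prop where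
  cont_u : ContinuousOn (fun p : ℝ × ℝ => u p.1 p.2) (Set.Icc 0 1 ×ˢ Set.Ici 0)
  cont_ux : ContinuousOn (fun p : ℝ × ℝ => ux p.1 p.2) (Set.Icc 0 1 ×ˢ Set.Ioi 0)
  cont_ut : ContinuousOn (fun p : ℝ × ℝ => ut p.1 p.2) (Set.Ioo 0 1 ×ˢ Set.Ioi 0)
  cont_uxx : ContinuousOn (fun p : ℝ × ℝ => uxx p.1 p.2) (Set.Ioo 0 1 ×ˢ Set.Ioi 0)
  deriv_x : ∀ t ∈ Set.Ioi (0:ℝ), ∀ x ∈ Set.Icc (0:ℝ) 1,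
      HasDerivWithinAt (fun y => u y t) (ux x t) (Set.Icc 0 1) x
  deriv_xx : ∀ t ∈ Set.Ioi (0:ℝ), ∀ x ∈ Set.Ioo (0:ℝ) 1,
      HasDerivWithinAt (fun y => ux y t) (uxx x t) (Set.Ioo 0 1) x
  deriv_t : ∀ t ∈ Set.Ioi (0:ℝ), ∀ x ∈ Set.Ioo (0:ℝ) 1,
      HasDerivWithinAt (fun s => u x s) (ut x t) (Set.Ioi 0) t
  pde : ∀ t ∈ Set.Ioi (0:ℝ), ∀ x ∈ Set.Ioo (0:ℝ) 1,
      ut x t = a * uxx x t - lam * u x t + f x t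

/-!
Multiplying a solution by `e^{σ t}` turns `u_t = a u_xx - λ u + f` into an equation with decay rate
`λ - σ > 0`, and the parabolic maximum principle (with the Robin condition at `x = 1`) bounds the
weighted sup of the solution by its initial data, the forcing divided by `λ - σ`, the Dirichlet
datum, and the Robin datum divided by `l`. For the observer errors this bound involves the data
only. For the tracking errors the Robin datum contains `k_i ũ⁽ⁱ⁻¹⁾(1,·)`, so the weighted sups
satisfy the cyclic system `W_i ≤ E + (k_i / l) W_{i-1}`. Unrolling it once around the cycle gives
`W_i ≤ 𝓜_i E + 𝒩 W_i`, and `𝒩 < 1` because every `k_i < l`.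
-/

open Set Filter Topology Function Real

theorem IsMaxOn.hasDerivWithinAt_mul_sub_nonpos {g : ℝ → ℝ} {s : Set ℝ} {a b g' : ℝ}
    (hmax : IsMaxOn g s a) (hg : HasDerivWithinAt g g' s a) (hs : Convex ℝ s) (ha : a ∈ s)
    (hb : b ∈ s) : g' * (b - a) ≤ 0 := by
  simpa [mul_comm] using hmax.localize.hasFDerivWithinAt_nonpos hg
    (sub_mem_posTangentConeAt_of_segment_subset (hs.segment_subset ha hb))

theorem IsLocalMax.secondDeriv_nonpos {g g' : ℝ → ℝ} {x₀ d : ℝ} (hmax : IsLocalMax g x₀)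
    (hg : ∀ᶠ y in 𝓝 x₀, HasDerivAt g (g' y) y) (hg' : HasDerivAt g' d x₀) : d ≤ 0 := by
  by_contra! hd
  have hg₀ : HasDerivAt g (g' x₀) x₀ := hg.self_of_nhds
  have hderiv : deriv g =ᶠ[𝓝 x₀] g' := hg.mono fun y hy => hy.deriv
  -- the second derivative test makes `x₀` also a local minimum, so `g` is locally constant
  have hmin : IsLocalMin g x₀ := isLocalMin_of_deriv_deriv_pos
    (by rwa [hderiv.deriv_eq, hg'.deriv]) (by rw [hg₀.deriv, hmax.hasDerivAt_eq_zero hg₀])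
    hg₀.continuousAt
  have hconst : ∀ᶠ y in 𝓝 x₀, g y = g x₀ := (hmax.and hmin).mono fun y h => le_antisymm h.1 h.2
  have hzero : g' =ᶠ[𝓝 x₀] fun _ => 0 := by
    filter_upwards [hconst.eventually_nhds, hg] with y hy hgy
    exact hgy.unique ((hasDerivAt_const y (g x₀)).congr_of_eventuallyEq hy)
  exact hd.ne' ((hg'.congr_of_eventuallyEq hzero.symm).unique (hasDerivAt_const x₀ 0))

structure IsRobinSubsolution (a μ l t : ℝ) (v vx vxx vt : ℝ → ℝ → ℝ) : Prop where
  hasDerivWithinAt_x : ∀ s ∈ Ioc 0 t, ∀ x ∈ Icc (0:ℝ) 1,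
    HasDerivWithinAt (v · s) (vx x s) (Icc 0 1) x
  hasDerivAt_xx : ∀ s ∈ Ioc 0 t, ∀ x ∈ Ioo (0:ℝ) 1, HasDerivAt (vx · s) (vxx x s) x
  hasDerivAt_t : ∀ s ∈ Ioc 0 t, ∀ x ∈ Ioo (0:ℝ) 1, HasDerivAt (v x ·) (vt x s) s
  pde_le : ∀ s ∈ Ioc 0 t, ∀ x ∈ Ioo (0:ℝ) 1, vt x s ≤ a * vxx x s - μ * v x s
  bc_left : ∀ s ∈ Ioc 0 t, vx 0 s = 0 ∨ v 0 s ≤ 0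
  bc_right : ∀ s ∈ Ioc 0 t, vx 1 s ≤ -l * v 1 s

namespace IsRobinSubsolution

variable {a μ l t : ℝ} {v vx vxx vt : ℝ → ℝ → ℝ}

theorem le_div_of_isMaxOn (hv : IsRobinSubsolution a μ l t v vx vxx vt) (ha : 0 ≤ a)
    (hμ : 0 < μ) (hl : 0 < l) (hic : ∀ x ∈ Icc (0:ℝ) 1, v x 0 ≤ 0) {δ x₀ s₀ : ℝ} (hδ : 0 < δ)
    (hx₀ : x₀ ∈ Icc (0:ℝ) 1) (hs₀ : s₀ ∈ Icc 0 t)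
    (hmax : IsMaxOn (fun p : ℝ × ℝ => v p.1 p.2 + δ * p.1) (Icc 0 1 ×ˢ Icc 0 t) (x₀, s₀)) :
    v x₀ s₀ ≤ δ / l := by
  have hδl : 0 < δ / l := div_pos hδ hl
  rcases hs₀.1.eq_or_lt with rfl | hs₀pos
  · exact (hic x₀ hx₀).trans hδl.le
  have hs₀' : s₀ ∈ Ioc 0 t := ⟨hs₀pos, hs₀.2⟩
  have hslice : IsMaxOn (fun y => v y s₀ + δ * y) (Icc 0 1) x₀ := fun y hy =>
    hmax (a := (y, s₀)) ⟨hy, hs₀⟩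
  have hslice_deriv : ∀ y ∈ Icc (0:ℝ) 1,
      HasDerivWithinAt (fun y => v y s₀ + δ * y) (vx y s₀ + δ) (Icc 0 1) y := fun y hy => by
    simpa using (hv.hasDerivWithinAt_x s₀ hs₀' y hy).fun_add ((hasDerivWithinAt_id y _).const_mul δ)
  have h0 : (0:ℝ) ∈ Icc 0 1 := left_mem_Icc.2 zero_le_one
  have h1 : (1:ℝ) ∈ Icc 0 1 := right_mem_Icc.2 zero_le_one
  rcases hx₀.1.eq_or_lt with rfl | hx₀pos
  · -- at `x = 0` the slope of the slice is `≤ 0`, which rules out the Neumann alternative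
    have hslope := hslice.hasDerivWithinAt_mul_sub_nonpos (hslice_deriv 0 h0) (convex_Icc 0 1) h0 h1
    rcases hv.bc_left s₀ hs₀' with h | h
    · rw [h] at hslope; linarith
    · linarith
  rcases hx₀.2.eq_or_lt with rfl | hx₀lt
  · have hslope := hslice.hasDerivWithinAt_mul_sub_nonpos (hslice_deriv 1 h1) (convex_Icc 0 1) h1 h0
    have := hv.bc_right s₀ hs₀'
    rw [le_div_iff₀ hl]
    linarith
  have hx₀I : x₀ ∈ Ioo (0:ℝ) 1 := ⟨hx₀pos, hx₀lt⟩
  have hxx : vxx x₀ s₀ ≤ 0 := by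
    refine (hslice.isLocalMax (Icc_mem_nhds hx₀pos hx₀lt)).secondDeriv_nonpos
      (g' := fun y => vx y s₀ + δ) ?_ ((hv.hasDerivAt_xx s₀ hs₀' x₀ hx₀I).add_const δ)
    filter_upwards [Ioo_mem_nhds hx₀pos hx₀lt] with y hy
    exact (hslice_deriv y (Ioo_subset_Icc_self hy)).hasDerivAt (Icc_mem_nhds hy.1 hy.2)
  have htime : 0 ≤ vt x₀ s₀ := by
    have hmax_t : IsMaxOn (v x₀ ·) (Icc 0 s₀) s₀ := fun r hr =>
      show v x₀ r ≤ v x₀ s₀ by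
        linarith [show v x₀ r + δ * x₀ ≤ v x₀ s₀ + δ * x₀ from
          hmax (a := (x₀, r)) ⟨hx₀, hr.1, hr.2.trans hs₀.2⟩]
    have := hmax_t.hasDerivWithinAt_mul_sub_nonpos
      (hv.hasDerivAt_t s₀ hs₀' x₀ hx₀I).hasDerivWithinAt (convex_Icc 0 s₀)
      (right_mem_Icc.2 hs₀.1) (left_mem_Icc.2 hs₀.1)
    nlinarith
  have := hv.pde_le s₀ hs₀' x₀ hx₀I
  nlinarith [mul_nonpos_of_nonneg_of_nonpos ha hxx]

theorem nonpos (hv : IsRobinSubsolution a μ l t v vx vxx vt) (ha : 0 ≤ a) (hμ : 0 < μ)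
    (hl : 0 < l) (hcont : ContinuousOn (fun p : ℝ × ℝ => v p.1 p.2) (Icc 0 1 ×ˢ Icc 0 t))
    (hic : ∀ x ∈ Icc (0:ℝ) 1, v x 0 ≤ 0) :
    ∀ x ∈ Icc (0:ℝ) 1, ∀ s ∈ Icc 0 t, v x s ≤ 0 := by
  intro x hx s hs
  refine le_of_forall_pos_le_add fun ε hε => ?_
  -- tilting by `δ x` excludes a maximum at a boundary point where `v_x = 0`
  set δ := ε * l / (l + 1)
  have hδ : 0 < δ := by positivity
  have hδε : δ + δ / l = ε := by simp only [δ]; field_simp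
  obtain ⟨⟨x₀, s₀⟩, ⟨hx₀, hs₀⟩, hmax⟩ := (isCompact_Icc.prod isCompact_Icc).exists_isMaxOn
    ⟨(x, s), hx, hs⟩ (hcont.add (continuousOn_const.mul continuousOn_fst))
  have hpeak := hv.le_div_of_isMaxOn ha hμ hl hic hδ hx₀ hs₀ hmax
  have : v x s + δ * x ≤ v x₀ s₀ + δ * x₀ := hmax (a := (x, s)) ⟨hx, hs⟩
  nlinarith [hx.1, hx₀.2]

end IsRobinSubsolution

theorem exp_mul_abs_le_exp_mul {σ s t y G : ℝ} (hσ : 0 ≤ σ) (hst : s ≤ t) (hy : |y| ≤ G) :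
    exp (σ * s) * |y| ≤ exp (σ * t) * G :=
  mul_le_mul (exp_le_exp.2 (mul_le_mul_of_nonneg_left hst hσ)) hy (abs_nonneg _) (exp_pos _).le

namespace IsParabolicSol

variable {a lam σ l t : ℝ} {f u ux uxx ut : ℝ → ℝ → ℝ}

theorem continuousOn_Icc (sol : IsParabolicSol a lam f u ux uxx ut) (t : ℝ) :
    ContinuousOn (fun p : ℝ × ℝ => u p.1 p.2) (Icc 0 1 ×ˢ Icc 0 t) :=
  sol.cont_u.mono (prod_mono subset_rfl Icc_subset_Ici_self)

/-- The weighted maximum principle: `e^{σ s} u` solves an equation with decay rate `lam - σ`. -/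
theorem exp_mul_abs_le (sol : IsParabolicSol a lam f u ux uxx ut) (ha : 0 ≤ a) (hσ : σ < lam)
    (hl : 0 < l) {K : ℝ}
    (hf : ∀ x ∈ Ioo (0:ℝ) 1, ∀ s ∈ Ioc 0 t, exp (σ * s) * |f x s| ≤ (lam - σ) * K)
    (hic : ∀ x ∈ Icc (0:ℝ) 1, |u x 0| ≤ K)
    (hbc0 : ∀ s ∈ Ioc 0 t, ux 0 s = 0 ∨ exp (σ * s) * |u 0 s| ≤ K)
    (hbc1 : ∀ s ∈ Ioc 0 t, exp (σ * s) * |ux 1 s + l * u 1 s| ≤ l * K) :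
    ∀ x ∈ Icc (0:ℝ) 1, ∀ s ∈ Icc 0 t, exp (σ * s) * |u x s| ≤ K := by
  have key : ∀ c : ℝ, |c| = 1 →
      ∀ x ∈ Icc (0:ℝ) 1, ∀ s ∈ Icc 0 t, c * (exp (σ * s) * u x s) - K ≤ 0 := by
    intro c hc
    have hc_le : ∀ s y, c * (exp (σ * s) * y) ≤ exp (σ * s) * |y| := fun s y => by
      simpa [abs_mul, hc] using le_abs_self (c * (exp (σ * s) * y))
    refine IsRobinSubsolution.nonpos (v := fun x s => c * (exp (σ * s) * u x s) - K)
      (vx := fun x s => c * (exp (σ * s) * ux x s)) (vxx := fun x s => c * (exp (σ * s) * uxx x s))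
      (vt := fun x s => c * (exp (σ * s) * (σ * u x s + ut x s))) ⟨?_, ?_, ?_, ?_, ?_, ?_⟩
      ha (sub_pos.2 hσ) hl ?_ ?_
    · intro s hs x hx
      exact (((sol.deriv_x s hs.1 x hx).const_mul _).const_mul c).sub_const K
    · intro s hs x hx
      exact (((sol.deriv_xx s hs.1 x hx).hasDerivAt (Ioo_mem_nhds hx.1 hx.2)).const_mul _).const_mul
        c
    · intro s hs x hx
      have hexp : HasDerivAt (fun r => exp (σ * r)) (exp (σ * s) * σ) s := by
        simpa using ((hasDerivAt_id s).const_mul σ).exp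
      refine ((hexp.mul ((sol.deriv_t s hs.1 x hx).hasDerivAt (Ioi_mem_nhds hs.1))).const_mul
        c).sub_const K |>.congr_deriv (by ring)
    · intro s hs x hx
      have := (hc_le s (f x s)).trans (hf x hx s hs)
      rw [sol.pde s hs.1 x hx]
      linear_combination this
    · intro s hs
      rcases hbc0 s hs with h | h
      · simp [h]
      · exact Or.inr (sub_nonpos.2 ((hc_le s _).trans h))
    · intro s hs
      linear_combination (hc_le s (ux 1 s + l * u 1 s)).trans (hbc1 s hs)
    · exact (continuousOn_const.mul ((continuous_exp.comp (continuous_const.mul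
        continuous_snd)).continuousOn.mul (sol.continuousOn_Icc t))).sub continuousOn_const
    · intro x hx
      simpa using (hc_le 0 (u x 0)).trans (by simpa using hic x hx)
  intro x hx s hs
  rw [← abs_of_pos (exp_pos (σ * s)), ← abs_mul, abs_le]
  have h₁ := key 1 abs_one x hx s hs
  have h₂ := key (-1) (by simp) x hx s hs
  constructor <;> linarith

theorem exp_mul_abs_le_of_neumann_robin (sol : IsParabolicSol a lam f u ux uxx ut) (ha : 0 ≤ a)
    (hσ₀ : 0 ≤ σ) (hσ : σ < lam) (hl : 0 < l) {F Q : ℝ}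
    (hbc0 : ∀ s > 0, ux 0 s = 0) (hbc1 : ∀ s > 0, ux 1 s = -l * u 1 s)
    (hf : ∀ x ∈ Icc (0:ℝ) 1, ∀ s ∈ Icc 0 t, |f x s| ≤ F) (hic : ∀ x ∈ Icc (0:ℝ) 1, |u x 0| ≤ Q) :
    ∀ x ∈ Icc (0:ℝ) 1, ∀ s ∈ Icc 0 t, exp (σ * s) * |u x s| ≤ Q + exp (σ * t) * F / (lam - σ) := by
  intro x hx s hs
  have hμ : 0 < lam - σ := sub_pos.2 hσ
  have hF : 0 ≤ F := (abs_nonneg _).trans (hf x hx s hs)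
  have hQ : 0 ≤ Q := (abs_nonneg _).trans (hic x hx)
  have hK : 0 ≤ exp (σ * t) * F / (lam - σ) := by positivity
  refine sol.exp_mul_abs_le ha hσ hl (fun y hy r hr => ?_) (fun y hy => ?_)
    (fun r hr => Or.inl (hbc0 r hr.1)) (fun r hr => ?_) x hx s hs
  · rw [mul_add, mul_div_cancel₀ _ hμ.ne']
    nlinarith [exp_mul_abs_le_exp_mul hσ₀ hr.2 (hf y (Ioo_subset_Icc_self hy) r ⟨hr.1.le, hr.2⟩)]
  · linarith [hic y hy]
  · simp only [hbc1 r hr.1, neg_mul, neg_add_cancel, abs_zero, mul_zero]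
    positivity

theorem exp_mul_abs_le_of_dirichlet_robin (sol : IsParabolicSol a lam f u ux uxx ut)
    (ha : 0 ≤ a) (hσ₀ : 0 ≤ σ) (hσ : σ < lam) (hl : 0 < l) {κ F U B D₀ D₁ W : ℝ}
    {g₀ g₁ d₀ d₁ : ℝ → ℝ} (hκ : 0 ≤ κ)
    (hbc0 : ∀ s > 0, u 0 s = g₀ s + d₀ s)
    (hbc1 : ∀ s > 0, ux 1 s = -l * u 1 s + κ * g₁ s + d₁ s)
    (hf : ∀ x ∈ Icc (0:ℝ) 1, ∀ s ∈ Icc 0 t, |f x s| ≤ F) (hic : ∀ x ∈ Icc (0:ℝ) 1, |u x 0| ≤ U)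
    (hg₀ : ∀ s ∈ Icc 0 t, exp (σ * s) * |g₀ s| ≤ B) (hd₀ : ∀ s ∈ Icc 0 t, |d₀ s| ≤ D₀)
    (hg₁ : ∀ s ∈ Icc 0 t, exp (σ * s) * |g₁ s| ≤ W) (hd₁ : ∀ s ∈ Icc 0 t, |d₁ s| ≤ D₁) :
    ∀ x ∈ Icc (0:ℝ) 1, ∀ s ∈ Icc 0 t,
      exp (σ * s) * |u x s| ≤ U + B + exp (σ * t) * (F / (lam - σ) + D₀ + D₁ / l) + κ / l * W := by
  intro x hx s hs
  have hμ : 0 < lam - σ := sub_pos.2 hσ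
  have hF : 0 ≤ F := (abs_nonneg _).trans (hf x hx s hs)
  have hU : 0 ≤ U := (abs_nonneg _).trans (hic x hx)
  have hB : 0 ≤ B := (mul_nonneg (exp_pos _).le (abs_nonneg _)).trans (hg₀ s hs)
  have hD₀ : 0 ≤ D₀ := (abs_nonneg _).trans (hd₀ s hs)
  have hW : 0 ≤ W := (mul_nonneg (exp_pos _).le (abs_nonneg _)).trans (hg₁ s hs)
  have hD₁ : 0 ≤ D₁ := (abs_nonneg _).trans (hd₁ s hs)
  have hΦ := exp_pos (σ * t)
  refine sol.exp_mul_abs_le ha hσ hl (fun y hy r hr => ?_) (fun y hy => ?_) (fun r hr => ?_)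
    (fun r hr => ?_) x hx s hs
  · have hr' : r ∈ Icc 0 t := ⟨hr.1.le, hr.2⟩
    have := exp_mul_abs_le_exp_mul hσ₀ hr.2 (hf y (Ioo_subset_Icc_self hy) r hr')
    have : 0 ≤ (lam - σ) * (U + B + exp (σ * t) * (D₀ + D₁ / l) + κ / l * W) := by positivity
    have : (lam - σ) * (U + B + exp (σ * t) * (F / (lam - σ) + D₀ + D₁ / l) + κ / l * W) =
        exp (σ * t) * F + (lam - σ) * (U + B + exp (σ * t) * (D₀ + D₁ / l) + κ / l * W) := by
      field_simp
      ring
    linarith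
  · have : 0 ≤ B + exp (σ * t) * (F / (lam - σ) + D₀ + D₁ / l) + κ / l * W := by positivity
    linarith [hic y hy]
  · have hr' : r ∈ Icc 0 t := ⟨hr.1.le, hr.2⟩
    right
    rw [hbc0 r hr.1]
    have := exp_mul_abs_le_exp_mul hσ₀ hr.2 (hd₀ r hr')
    have : 0 ≤ U + exp (σ * t) * (F / (lam - σ) + D₁ / l) + κ / l * W := by positivity
    nlinarith [abs_add_le (g₀ r) (d₀ r), hg₀ r hr', exp_pos (σ * r)]
  · have hr' : r ∈ Icc 0 t := ⟨hr.1.le, hr.2⟩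
    rw [hbc1 r hr.1, show -l * u 1 r + κ * g₁ r + d₁ r + l * u 1 r = κ * g₁ r + d₁ r by ring]
    have := exp_mul_abs_le_exp_mul hσ₀ hr.2 (hd₁ r hr')
    have : 0 ≤ l * (U + B + exp (σ * t) * (F / (lam - σ) + D₀)) := by positivity
    have : l * (exp (σ * t) * (D₁ / l) + κ / l * W) = exp (σ * t) * D₁ + κ * W := by field_simp
    have := abs_add_le (κ * g₁ r) (d₁ r)
    rw [abs_mul, abs_of_nonneg hκ] at this
    nlinarith [hg₁ r hr', exp_pos (σ * r), mul_le_mul_of_nonneg_left (hg₁ r hr') hκ]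

end IsParabolicSol

theorem le_mul_add_mul_exp_neg_mul {σ t y C D U : ℝ}
    (h : exp (σ * t) * y ≤ C * (exp (σ * t) * D + U)) : y ≤ C * D + C * exp (-σ * t) * U := by
  have hexp : exp (-σ * t) * exp (σ * t) = 1 := by rw [← exp_add]; simp
  calc y = exp (-σ * t) * (exp (σ * t) * y) := by rw [← mul_assoc, hexp, one_mul]
    _ ≤ exp (-σ * t) * (C * (exp (σ * t) * D + U)) := by gcongr
    _ = C * D + C * exp (-σ * t) * U := by linear_combination C * D * hexp

theorem supIcc01_le {h : ℝ → ℝ} {B : ℝ} (hB : ∀ x ∈ Icc (0:ℝ) 1, |h x| ≤ B) : supIcc01 h ≤ B :=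
  csSup_le ((nonempty_Icc.2 zero_le_one).image _) (forall_mem_image.2 hB)

theorem le_maxAgents {N : ℕ} (hN : 1 ≤ N) {g : ℤ → ℝ} (hg : Periodic g N) (j : ℤ) :
    g j ≤ maxAgents N g := by
  obtain ⟨r, hr, hgr⟩ := hg.exists_mem_Ioc (by exact_mod_cast hN) j 0
  rw [hgr]
  exact le_csSup ((finite_Icc _ _).image g).bddAbove ⟨r, ⟨by grind, by grind⟩, rfl⟩

theorem abs_le_maxAgents_supIcc01 {N : ℕ} (hN : 1 ≤ N) {h : ℤ → ℝ → ℝ} (hper : Periodic h N)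
    (hh : ∀ i, ContinuousOn (h i) (Icc 0 1)) (i : ℤ) {x : ℝ} (hx : x ∈ Icc (0:ℝ) 1) :
    |h i x| ≤ maxAgents N (fun j => supIcc01 (h j)) :=
  (le_csSup (isCompact_Icc.bddAbove_image (hh i).abs) ⟨x, hx, rfl⟩).trans
    (le_maxAgents hN (hper.comp supIcc01) i)

theorem abs_le_maxAgents_supT {N : ℕ} (hN : 1 ≤ N) {g : ℤ → ℝ → ℝ} (hper : Periodic g N)
    (hg : ∀ i, ContinuousOn (g i) (Ici 0)) (i : ℤ) {s t : ℝ} (hs : s ∈ Icc 0 t) :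
    |g i s| ≤ maxAgents N (fun j => supT (g j) t) :=
  (le_csSup (isCompact_Icc.bddAbove_image ((hg i).mono Icc_subset_Ici_self).abs) ⟨s, hs, rfl⟩).trans
    (le_maxAgents hN (hper.comp (supT · t)) i)

theorem abs_le_maxAgents_supRect {N : ℕ} (hN : 1 ≤ N) {f : ℤ → ℝ → ℝ → ℝ} (hper : Periodic f N)
    (hf : ∀ i, ContinuousOn (fun p : ℝ × ℝ => f i p.1 p.2) (Icc 0 1 ×ˢ Ici 0)) (i : ℤ)
    {x s t : ℝ} (hx : x ∈ Icc (0:ℝ) 1) (hs : s ∈ Icc 0 t) :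
    |f i x s| ≤ maxAgents N (fun j => supRect (f j) t) :=
  (le_csSup ((isCompact_Icc.prod isCompact_Icc).bddAbove_image
      ((hf i).mono (prod_mono subset_rfl Icc_subset_Ici_self)).abs) ⟨(x, s), ⟨hx, hs⟩, rfl⟩).trans
    (le_maxAgents hN (hper.comp (supRect · t)) i)

noncomputable def weightedSup (σ t : ℝ) (u : ℝ → ℝ → ℝ) : ℝ :=
  sSup ((fun p : ℝ × ℝ => exp (σ * p.2) * |u p.1 p.2|) '' (Icc 0 1 ×ˢ Icc 0 t))

theorem le_weightedSup {σ t x s : ℝ} {u : ℝ → ℝ → ℝ}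
    (hu : ContinuousOn (fun p : ℝ × ℝ => u p.1 p.2) (Icc 0 1 ×ˢ Icc 0 t))
    (hx : x ∈ Icc (0:ℝ) 1) (hs : s ∈ Icc 0 t) : exp (σ * s) * |u x s| ≤ weightedSup σ t u :=
  le_csSup ((isCompact_Icc.prod isCompact_Icc).bddAbove_image
    ((continuous_exp.comp (continuous_const.mul continuous_snd)).continuousOn.mul hu.abs))
    ⟨(x, s), ⟨hx, hs⟩, rfl⟩

theorem weightedSup_le {σ t B : ℝ} {u : ℝ → ℝ → ℝ} (ht : 0 ≤ t)
    (hB : ∀ x ∈ Icc (0:ℝ) 1, ∀ s ∈ Icc 0 t, exp (σ * s) * |u x s| ≤ B) : weightedSup σ t u ≤ B :=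
  csSup_le (((nonempty_Icc.2 zero_le_one).prod (nonempty_Icc.2 ht)).image _)
    (forall_mem_image.2 fun p hp => hB p.1 hp.1 p.2 hp.2)


open Finset in
@[to_additive]
theorem prod_Icc_int_eq_prod_range {M : Type*} [CommMonoid M] (g : ℤ → M) (a b : ℤ) :
    ∏ m ∈ Icc a b, g m = ∏ r ∈ range (b + 1 - a).toNat, g (a + r) := by
  rw [Int.Icc_eq_finset_map, prod_map]
  rfl

noncomputable def pathGain (l : ℝ) (k : ℤ → ℝ) (m : ℕ) (j : ℤ) : ℝ :=
  (∏ r ∈ Finset.range m, k (j - r)) / l ^ m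

section CyclicSystem

variable {N : ℕ} {l : ℝ} {k : ℤ → ℝ}

theorem pathGain_succ (m : ℕ) (j : ℤ) :
    pathGain l k (m + 1) j = pathGain l k m j * (k (j - m) / l) := by
  rw [pathGain, pathGain, Finset.prod_range_succ, pow_succ, mul_div_mul_comm]

theorem pathGain_nonneg (hl : 0 ≤ l) (hk : ∀ i, 0 ≤ k i) (m : ℕ) (j : ℤ) :
    0 ≤ pathGain l k m j :=
  div_nonneg (Finset.prod_nonneg fun _ _ => hk _) (pow_nonneg hl m)

theorem pathGain_period (hk : Periodic k N) (j : ℤ) : pathGain l k N j = calN N l k := by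
  rw [pathGain, calN]
  congr 1
  -- going once around the cycle collects every gain, whatever the starting agent
  have hshift : Periodic (fun j => ∏ r ∈ Finset.range N, k (j - r)) 1 := by
    intro j
    dsimp only
    rcases N with _ | n
    · simp
    rw [Finset.prod_range_succ', Finset.prod_range_succ]
    push_cast
    congr 1
    · exact Finset.prod_congr rfl fun r _ => by ring_nf
    · rw [← hk (j - n)]
      congr 1
      push_cast
      ring
  have := (hshift.int_mul_eq j).trans (hshift.int_mul_eq N).symm
  simp only [Int.cast_id, mul_one] at this
  rw [this]
  exact Finset.prod_nbij' (fun r => (N:ℤ) - r) (fun i => (N - i).toNat) (by simp; omega)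
    (by simp; omega) (by simp) (by simp; omega) (by simp)

theorem calM_eq_sum_pathGain (hk : Periodic k N) {j : ℕ} (hj : j < N) :
    calM N l k j = ∑ m ∈ Finset.range N, pathGain l k m j := by
  obtain ⟨n, rfl⟩ : ∃ n, N = j + 1 + n := ⟨N - (j + 1), by omega⟩
  rw [Finset.sum_range_add, Finset.sum_range_succ', calM]
  simp only [sum_Icc_int_eq_sum_range, prod_Icc_int_eq_prod_range]
  rw [show ((j:ℤ) + 1 - 1).toNat = j by omega,
    show (((j + 1 + n : ℕ) : ℤ) - 1 + 1 - (j + 1)).toNat = n by omega]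
  simp only [add_sub_cancel_left, sub_zero, Int.toNat_natCast_add_one, zero_add, sub_add_cancel,
    Int.toNat_natCast, Int.toNat_sub', Nat.cast_add, Nat.cast_one, pathGain, Finset.range_zero,
    Finset.prod_empty, pow_zero, div_one]
  rw [add_comm (1:ℝ)]
  refine congrArg₂ (· + ·) (congrArg (· + 1) (Finset.sum_congr rfl fun m _ => ?_))
    (Finset.sum_congr rfl fun m _ => ?_)
  · rw [show 1 + (m:ℤ) = ((m + 1 : ℕ) : ℤ) by push_cast; ring, zpow_natCast]
  -- paths longer than `j` wrap around from agent `1` to agent `N`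
  rw [show (j:ℤ) + 1 + m = ((j + 1 + m : ℕ) : ℤ) by push_cast; ring, zpow_natCast,
    show ((j + 1 + m : ℕ) : ℤ).toNat - j = m + 1 by omega,
    show j + 1 + m = j + (m + 1) by ring, Finset.prod_range_add _ j (m + 1)]
  congr 2
  refine Finset.prod_congr rfl fun s _ => ?_
  rw [← hk (j - (j + s : ℕ))]
  congr 1
  push_cast
  ring

theorem calN_lt_one (hN : 1 ≤ N) (hk : ∀ i, k i ∈ Ioo 0 l) : calN N l k < 1 := by
  have hl : 0 < l := (hk 0).1.trans (hk 0).2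
  rw [calN, div_lt_one (pow_pos hl N)]
  calc ∏ i ∈ Finset.Icc (1:ℤ) N, k i < ∏ _i ∈ Finset.Icc (1:ℤ) N, l :=
        Finset.prod_lt_prod_of_nonempty (fun i _ => (hk i).1) (fun i _ => (hk i).2)
          (Finset.nonempty_Icc.2 (by exact_mod_cast hN))
    _ = l ^ N := by simp

theorem le_sum_pathGain_add {W : ℤ → ℝ} {E : ℝ} (hl : 0 ≤ l) (hk : ∀ i, 0 ≤ k i)
    (hW : ∀ j, W j ≤ E + k j / l * W (j - 1)) (n : ℕ) (j : ℤ) :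
    W j ≤ E * ∑ m ∈ Finset.range n, pathGain l k m j + pathGain l k n j * W (j - n) := by
  induction n with
  | zero => simp [pathGain]
  | succ n ih =>
    have := mul_le_mul_of_nonneg_left (hW (j - n)) (pathGain_nonneg hl hk n j)
    rw [Finset.sum_range_succ, pathGain_succ, Nat.cast_succ, ← sub_sub]
    linear_combination ih + this

theorem le_calC_mul_of_le_add (hN : 1 ≤ N) (hk_per : Periodic k N) (hk : ∀ i, k i ∈ Ioo 0 l)
    {W : ℤ → ℝ} {E : ℝ} (hW_per : Periodic W N) (hW : ∀ j, W j ≤ E + k j / l * W (j - 1))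
    {j : ℤ} (hj₀ : 0 ≤ j) (hjN : j < N) : W j ≤ calC N l k j * E := by
  have hl : 0 < l := (hk 0).1.trans (hk 0).2
  lift j to ℕ using hj₀
  have hcycle := le_sum_pathGain_add hl.le (fun i => (hk i).1.le) hW N j
  rw [pathGain_period hk_per, hW_per.sub_eq,
    ← calM_eq_sum_pathGain hk_per (by exact_mod_cast hjN)] at hcycle
  rw [calC, div_mul_eq_mul_div, le_div_iff₀ (sub_pos.2 (calN_lt_one hN hk))]
  linear_combination hcycle

end CyclicSystem

theorem stmt14_general
    (N : ℕ) (hN : 2 ≤ N)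
    (a lam l σ : ℝ) (ha : 0 < a) (hl : 0 < l)
    (hσ : σ ∈ Set.Ioo 0 lam)
    (k : ℤ → ℝ) (hk_per : ∀ i : ℤ, k (i + N) = k i) (hk : ∀ i : ℤ, k i ∈ Set.Ioo 0 l)
    (f : ℤ → ℝ → ℝ → ℝ) (d₀ d₁ : ℤ → ℝ → ℝ) (qt0 ut0 : ℤ → ℝ → ℝ)
    (hf_per : ∀ i : ℤ, f (i + N) = f i)
    (hd₀_per : ∀ i : ℤ, d₀ (i + N) = d₀ i) (hd₁_per : ∀ i : ℤ, d₁ (i + N) = d₁ i)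
    (hqt0_per : ∀ i : ℤ, qt0 (i + N) = qt0 i) (hut0_per : ∀ i : ℤ, ut0 (i + N) = ut0 i)
    (hf : ∀ i : ℤ, ContinuousOn (fun p : ℝ × ℝ => f i p.1 p.2) (Set.Icc 0 1 ×ˢ Set.Ici 0))
    (hd₀ : ∀ i : ℤ, ContinuousOn (d₀ i) (Set.Ici 0))
    (hd₁ : ∀ i : ℤ, ContinuousOn (d₁ i) (Set.Ici 0))
    (hqt0 : ∀ i : ℤ, ContinuousOn (qt0 i) (Set.Icc 0 1))
    (hut0 : ∀ i : ℤ, ContinuousOn (ut0 i) (Set.Icc 0 1))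
    -- observer-error systems q̃⁽ⁱ⁾
    (qt qtx qtxx qtt : ℤ → ℝ → ℝ → ℝ)
    (hqt_sol : ∀ i : ℤ, IsParabolicSol a lam (f i) (qt i) (qtx i) (qtxx i) (qtt i))
    (hqt_bc0 : ∀ i : ℤ, ∀ t > (0:ℝ), qtx i 0 t = 0)
    (hqt_bc1 : ∀ i : ℤ, ∀ t > (0:ℝ), qtx i 1 t = -l * qt i 1 t)
    (hqt_ic : ∀ i : ℤ, ∀ x ∈ Set.Icc (0:ℝ) 1, qt i x 0 = qt0 i x)
    -- tracking-error systems ũ⁽ⁱ⁾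
    (ut utx utxx utt : ℤ → ℝ → ℝ → ℝ)
    (hut_per : ∀ i : ℤ, ut (i + N) = ut i)
    (hut_sol : ∀ i : ℤ, IsParabolicSol a lam (f i) (ut i) (utx i) (utxx i) (utt i))
    (hut_bc0 : ∀ i : ℤ, ∀ t > (0:ℝ), ut i 0 t = qt i 0 t + d₀ i t)
    (hut_bc1 : ∀ i : ℤ, ∀ t > (0:ℝ),
        utx i 1 t = -l * ut i 1 t + k i * ut (i - 1) 1 t + d₁ i t)
    (hut_ic : ∀ i : ℤ, ∀ x ∈ Set.Icc (0:ℝ) 1, ut i x 0 = ut0 i x) :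
    ∀ i ∈ Set.Icc (1:ℤ) (N:ℤ), ∀ t > (0:ℝ),
      supIcc01 (fun x => ut i x t) ≤
        calCt N l k i * calD N lam σ l f d₀ d₁ t +
        calCt N l k i * Real.exp (-σ * t) *
          (maxAgents N (fun j => supIcc01 (ut0 j)) +
            maxAgents N (fun j => supIcc01 (qt0 j))) := by
  intro i ⟨hi₁, hi₂⟩ t ht
  have hN₁ : 1 ≤ N := by omega
  set F := maxAgents N (fun j => supRect (f j) t)
  set Q₀ := maxAgents N (fun j => supIcc01 (qt0 j))
  set E := exp (σ * t) * calD N lam σ l f d₀ d₁ t + (maxAgents N (fun j => supIcc01 (ut0 j)) + Q₀)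
  set W : ℤ → ℝ := fun j => weightedSup σ t (ut j)
  have hF : ∀ j, ∀ x ∈ Icc (0:ℝ) 1, ∀ s ∈ Icc 0 t, |f j x s| ≤ F := fun j x hx s hs =>
    abs_le_maxAgents_supRect hN₁ hf_per hf j hx hs
  have hq : ∀ j, ∀ x ∈ Icc (0:ℝ) 1, ∀ s ∈ Icc 0 t,
      exp (σ * s) * |qt j x s| ≤ Q₀ + exp (σ * t) * F / (lam - σ) := fun j =>
    (hqt_sol j).exp_mul_abs_le_of_neumann_robin ha.le hσ.1.le hσ.2 hl (hqt_bc0 j) (hqt_bc1 j)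
      (hF j) fun x hx => hqt_ic j x hx ▸ abs_le_maxAgents_supIcc01 hN₁ hqt0_per hqt0 j hx
  have hu : ∀ j, ∀ x ∈ Icc (0:ℝ) 1, ∀ s ∈ Icc 0 t,
      exp (σ * s) * |ut j x s| ≤ E + k j / l * W (j - 1) := by
    intro j x hx s hs
    refine ((hut_sol j).exp_mul_abs_le_of_dirichlet_robin ha.le hσ.1.le hσ.2 hl (hk j).1.le
      (hut_bc0 j) (hut_bc1 j) (hF j)
      (fun y hy => hut_ic j y hy ▸ abs_le_maxAgents_supIcc01 hN₁ hut0_per hut0 j hy)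
      (hq j 0 (left_mem_Icc.2 zero_le_one))
      (fun r hr => abs_le_maxAgents_supT hN₁ hd₀_per hd₀ j hr)
      (fun r hr => le_weightedSup ((hut_sol (j - 1)).continuousOn_Icc t)
        (right_mem_Icc.2 zero_le_one) hr)
      (fun r hr => abs_le_maxAgents_supT hN₁ hd₁_per hd₁ j hr) x hx s hs).trans_eq ?_
    simp only [E, F, calD]
    ring
  have hW : W (i - 1) ≤ calC N l k (i - 1) * E :=
    le_calC_mul_of_le_add hN₁ hk_per hk (Periodic.comp hut_per (weightedSup σ t))
      (fun j => weightedSup_le ht.le (hu j)) (by omega) (by omega)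
  refine supIcc01_le fun x hx => le_mul_add_mul_exp_neg_mul ?_
  calc exp (σ * t) * |ut i x t| ≤ E + k i / l * W (i - 1) := hu i x hx t (right_mem_Icc.2 ht.le)
    _ ≤ E + k i / l * (calC N l k (i - 1) * E) := by have := (hk i).1; gcongr
    _ = calCt N l k i * E := by rw [calCt]; ring

/-- Theorem 2: robustness of the tracking error system.  Agents are indexed by `ℤ`
with all data and solutions `N`-periodic (indices cyclic modulo `N`). -/
theorem stmt14
    (N : ℕ) (hN : 2 ≤ N)
    (a lam l σ : ℝ) (ha : 0 < a) (hlam : 0 < lam) (hl : 0 < l)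
    (hσ : σ ∈ Set.Ioo 0 lam)
    (k : ℤ → ℝ) (hk_per : ∀ i : ℤ, k (i + N) = k i) (hk : ∀ i : ℤ, k i ∈ Set.Ioo 0 l)
    (f : ℤ → ℝ → ℝ → ℝ) (d₀ d₁ : ℤ → ℝ → ℝ) (qt0 ut0 : ℤ → ℝ → ℝ)
    (hf_per : ∀ i : ℤ, f (i + N) = f i)
    (hd₀_per : ∀ i : ℤ, d₀ (i + N) = d₀ i) (hd₁_per : ∀ i : ℤ, d₁ (i + N) = d₁ i)
    (hqt0_per : ∀ i : ℤ, qt0 (i + N) = qt0 i) (hut0_per : ∀ i : ℤ, ut0 (i + N) = ut0 i)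
    (hf : ∀ i : ℤ, ContinuousOn (fun p : ℝ × ℝ => f i p.1 p.2) (Set.Icc 0 1 ×ˢ Set.Ici 0))
    (hd₀ : ∀ i : ℤ, ContinuousOn (d₀ i) (Set.Ici 0))
    (hd₁ : ∀ i : ℤ, ContinuousOn (d₁ i) (Set.Ici 0))
    (hqt0 : ∀ i : ℤ, ContinuousOn (qt0 i) (Set.Icc 0 1))
    (hut0 : ∀ i : ℤ, ContinuousOn (ut0 i) (Set.Icc 0 1))
    -- observer-error systems q̃⁽ⁱ⁾
    (qt qtx qtxx qtt : ℤ → ℝ → ℝ → ℝ)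
    (hqt_per : ∀ i : ℤ, qt (i + N) = qt i)
    (hqt_sol : ∀ i : ℤ, IsParabolicSol a lam (f i) (qt i) (qtx i) (qtxx i) (qtt i))
    (hqt_bc0 : ∀ i : ℤ, ∀ t > (0:ℝ), qtx i 0 t = 0)
    (hqt_bc1 : ∀ i : ℤ, ∀ t > (0:ℝ), qtx i 1 t = -l * qt i 1 t)
    (hqt_ic : ∀ i : ℤ, ∀ x ∈ Set.Icc (0:ℝ) 1, qt i x 0 = qt0 i x)
    -- tracking-error systems ũ⁽ⁱ⁾
    (ut utx utxx utt : ℤ → ℝ → ℝ → ℝ)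
    (hut_per : ∀ i : ℤ, ut (i + N) = ut i)
    (hut_sol : ∀ i : ℤ, IsParabolicSol a lam (f i) (ut i) (utx i) (utxx i) (utt i))
    (hut_bc0 : ∀ i : ℤ, ∀ t > (0:ℝ), ut i 0 t = qt i 0 t + d₀ i t)
    (hut_bc1 : ∀ i : ℤ, ∀ t > (0:ℝ),
        utx i 1 t = -l * ut i 1 t + k i * ut (i - 1) 1 t + d₁ i t)
    (hut_ic : ∀ i : ℤ, ∀ x ∈ Set.Icc (0:ℝ) 1, ut i x 0 = ut0 i x) :
    ∀ i ∈ Set.Icc (1:ℤ) (N:ℤ), ∀ t > (0:ℝ),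
      supIcc01 (fun x => ut i x t) ≤
        calCt N l k i * calD N lam σ l f d₀ d₁ t +
        calCt N l k i * Real.exp (-σ * t) *
          (maxAgents N (fun j => supIcc01 (ut0 j)) +
            maxAgents N (fun j => supIcc01 (qt0 j))) :=
  stmt14_general N hN a lam l σ ha hl hσ k hk_per hk f d₀ d₁ qt0 ut0 hf_per hd₀_per hd₁_per hqt0_per
    hut0_per hf hd₀ hd₁ hqt0 hut0 qt qtx qtxx qtt hqt_sol hqt_bc0 hqt_bc1 hqt_ic ut utx utxx utt
    hut_per hut_sol hut_bc0 hut_bc1 hut_ic
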